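/- Every ordering of the 5-cycle contains every 1-ordering of the 4-path: for any five distinct elements w1,w2,w3,w4,w5 of a linear order (forming the 5-cycle with edge set E = {{w1,w2},{w2,w3},{w3,w4},{w4,w5},{w5,w1}}), and any i,l ∈ {1,2,3,4}, there exist four distinct elements x1,x2,x3,x4 among w1,…,w5 such that each of {x1,x2},{x2,x3},{x3,x4} belongs to E and x_i is the l-th smallest of x1,x2,x3,x4. -/

import Mathlib

/-!
Delete a vertex `o` of the 5-cycle: the remaining four vertices form a 4-path, traversed in
either direction, and the `i`-th vertex `v` of that path is `o ± i`. So for a vertex `v` the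
deleted vertex may be either of two distinct vertices other than `v`, and the rank of `v` on the
path is its rank `r` among all five vertices, minus one if the deleted vertex lies below `v`.
For `r ≤ 1` at most one vertex lies below `v`, so some choice keeps the rank `r`; for `r ≥ 3` at
most one lies above `v`, so some choice lowers it to `r - 1`. The ranks `0, 1, 3, 4` of the
cycle then give every rank `0, 1, 2, 3` on the path.
-/

open Finset Function

section Rank

variable {ι α : Type*} [Fintype ι] [LinearOrder α] {w : ι → α}

theorem card_filter_lt_lt_card (v : ι) : #{z | w z < w v} < Fintype.card ι :=
  card_lt_univ_of_notMem (x := v) (by simp)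

theorem card_filter_lt_lt_card_filter_lt {u v : ι} (h : w u < w v) :
    #{z | w z < w u} < #{z | w z < w v} := by
  refine card_lt_card ((ssubset_iff_of_subset fun z hz => ?_).2 ⟨u, by simp [h]⟩)
  simp only [mem_filter, mem_univ, true_and] at hz ⊢
  exact hz.trans h

theorem exists_card_filter_lt_eq (hw : Injective w) {r : ℕ} (hr : r < Fintype.card ι) :
    ∃ v, #{z | w z < w v} = r := by
  let rank : ι → Fin (Fintype.card ι) := fun v => ⟨_, card_filter_lt_lt_card (w := w) v⟩
  have hrank : Injective rank := by
    intro u v huv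
    simp only [rank, Fin.mk.injEq] at huv
    rcases lt_trichotomy (w u) (w v) with h | h | h
    · exact absurd huv (card_filter_lt_lt_card_filter_lt h).ne
    · exact hw h
    · exact absurd huv (card_filter_lt_lt_card_filter_lt h).ne'
  obtain ⟨v, hv⟩ := ((Fintype.bijective_iff_injective_and_card rank).2 ⟨hrank, by simp⟩).2 ⟨r, hr⟩
  exact ⟨v, congrArg Fin.val hv⟩

theorem card_filter_lt_erase_of_not_lt [DecidableEq ι] {o v : ι} (h : ¬w o < w v) :
    #{z ∈ univ.erase o | w z < w v} = #{z | w z < w v} := by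
  rw [filter_erase, erase_eq_of_notMem (by simp [h])]

theorem card_filter_lt_erase_add_one [DecidableEq ι] {o v : ι} (h : w o < w v) :
    #{z ∈ univ.erase o | w z < w v} + 1 = #{z | w z < w v} := by
  rw [filter_erase, card_erase_add_one (by simp [h])]

theorem exists_card_filter_lt_erase_eq_of_le_one [DecidableEq ι] (hw : Injective w)
    (s : ι → Finset ι) (hs : ∀ v, 2 ≤ #(s v)) {t : ℕ} (ht : t ≤ 1) (htι : t < Fintype.card ι) :
    ∃ v, ∃ o ∈ s v, #{z ∈ univ.erase o | w z < w v} = t := by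
  obtain ⟨v, hv⟩ := exists_card_filter_lt_eq hw htι
  obtain ⟨o, ho, hov⟩ := exists_mem_notMem_of_card_lt_card (s := {z | w z < w v}) (t := s v)
    (by have := hs v; omega)
  refine ⟨v, o, ho, ?_⟩
  rw [card_filter_lt_erase_of_not_lt (by simpa using hov), hv]

theorem exists_card_filter_lt_erase_eq_of_card_le [DecidableEq ι] (hw : Injective w)
    (s : ι → Finset ι) (hs : ∀ v, 2 ≤ #(s v)) (hvs : ∀ v, v ∉ s v) {t : ℕ}
    (ht : Fintype.card ι ≤ t + 3) (htι : t + 1 < Fintype.card ι) :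
    ∃ v, ∃ o ∈ s v, #{z ∈ univ.erase o | w z < w v} = t := by
  obtain ⟨v, hv⟩ := exists_card_filter_lt_eq hw htι
  obtain ⟨o, ho, hov⟩ : ∃ o ∈ s v, w o < w v := by
    by_contra! hnot
    have hsub : insert v (s v) ⊆ ({z | ¬w z < w v} : Finset ι) := by
      intro z hz
      rcases mem_insert.1 hz with rfl | hz
      · simp
      · simpa using hnot z hz
    have hle := card_le_card hsub
    rw [card_insert_of_notMem (hvs v)] at hle
    have hsplit := card_filter_add_card_filter_not (s := univ) fun z => w z < w v
    rw [card_univ] at hsplit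
    have := hs v
    omega
  refine ⟨v, o, ho, ?_⟩
  have := card_filter_lt_erase_add_one hov
  omega

end Rank

section Cycle

/-- For `d = ±1`, the walk `cycleWalk o d 0, …, cycleWalk o d 3` is a path in the 5-cycle
`ZMod 5` through all vertices except `o`. -/
def cycleWalk (o d : ZMod 5) (k : ℕ) : ZMod 5 := o + d * (k + 1)

theorem cycleWalk_succ (o d : ZMod 5) (k : ℕ) : cycleWalk o d (k + 1) = cycleWalk o d k + d := by
  simp only [cycleWalk]
  push_cast
  ring

theorem image_cycleWalk (o : ZMod 5) {d : ZMod 5} (hd : d ≠ 0) :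
    univ.image (fun k : Fin 4 => cycleWalk o d k) = univ.erase o := by
  revert o d
  decide

theorem injective_cycleWalk (o : ZMod 5) {d : ZMod 5} (hd : d ≠ 0) :
    Injective fun k : Fin 4 => cycleWalk o d k := by
  rw [← Set.injOn_univ, ← coe_univ, ← card_image_iff, image_cycleWalk o hd]
  simp

theorem card_filter_cycleWalk (o : ZMod 5) {d : ZMod 5} (hd : d ≠ 0) (P : ZMod 5 → Prop)
    [DecidablePred P] : #{k : Fin 4 | P (cycleWalk o d k)} = #{z ∈ univ.erase o | P z} := by
  rw [← image_cycleWalk o hd, filter_image, card_image_of_injective _ (injective_cycleWalk o hd)]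

theorem exists_cycleWalk_card_filter_lt_eq {α : Type*} [LinearOrder α] {w : ZMod 5 → α}
    (hw : Injective w) (k : Fin 4) {t : ℕ} (ht : t < 4) :
    ∃ o d, (d = 1 ∨ d = -1) ∧ #{j : Fin 4 | w (cycleWalk o d j) < w (cycleWalk o d k)} = t := by
  set c : ZMod 5 := (k : ℕ) + 1 with hc
  have hc0 : c ≠ 0 ∧ c + c ≠ 0 := by revert k; decide
  have hs : ∀ v : ZMod 5, 2 ≤ #{v - c, v + c} := fun v =>
    (card_pair fun h => hc0.2 (by linear_combination -h)).ge
  have hvs : ∀ v : ZMod 5, v ∉ ({v - c, v + c} : Finset _) := fun v => by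
    simp only [mem_insert, mem_singleton, not_or]
    exact ⟨fun h => hc0.1 (by linear_combination h), fun h => hc0.1 (by linear_combination -h)⟩
  obtain ⟨v, o, ho, hcount⟩ : ∃ v, ∃ o ∈ ({v - c, v + c} : Finset _),
      #{z ∈ univ.erase o | w z < w v} = t := by
    rcases le_or_gt t 1 with ht1 | ht2
    · exact exists_card_filter_lt_erase_eq_of_le_one hw _ hs ht1 (by simp; omega)
    · exact exists_card_filter_lt_erase_eq_of_card_le hw _ hs hvs (by simp; omega) (by simp; omega)
  obtain ⟨d, hd, rfl⟩ : ∃ d : ZMod 5, (d = 1 ∨ d = -1) ∧ o = v - d * c := by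
    rcases mem_insert.1 ho with rfl | ho
    · exact ⟨1, .inl rfl, by ring⟩
    · exact ⟨-1, .inr rfl, by rw [mem_singleton.1 ho]; ring⟩
  have hd0 : d ≠ 0 := by rcases hd with rfl | rfl <;> decide
  refine ⟨v - d * c, d, hd, ?_⟩
  rw [show cycleWalk (v - d * c) d k = v by simp only [cycleWalk, hc]; ring,
    card_filter_cycleWalk _ hd0 fun z => w z < w v, hcount]

theorem sym2_mk_add_mem_of_eq_one_or_eq_neg_one {G β : Type*} [AddGroupWithOne G] {w : G → β}
    {E : Set (Sym2 β)} (hE : ∀ u, s(w u, w (u + 1)) ∈ E) {d : G} (hd : d = 1 ∨ d = -1) (u : G) :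
    s(w u, w (u + d)) ∈ E := by
  rcases hd with hd | hd <;> rw [hd]
  · exact hE u
  · simpa [Sym2.eq_swap, ← sub_eq_add_neg] using hE (u - 1)

end Cycle

/-- Every ordering of the 5-cycle contains every 1-ordering of the 4-path: for any five
distinct elements `w1, …, w5` of a linear order, forming the 5-cycle with edge set
`E = {{w1,w2},{w2,w3},{w3,w4},{w4,w5},{w5,w1}}`, and any `i, l ∈ {1,2,3,4}`, there are
four distinct elements `x 0, x 1, x 2, x 3` among `w1, …, w5` such that each of the pairs
`{x 0, x 1}, {x 1, x 2}, {x 2, x 3}` belongs to `E` and the `(i-1)`-indexed vertex is the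
`l`-th smallest of the four (exactly `l - 1` of the chosen elements are smaller). -/
theorem cycle5_contains_all_one_orderings_of_P4
    {α : Type*} [LinearOrder α] (w1 w2 w3 w4 w5 : α)
    (h12 : w1 ≠ w2) (h13 : w1 ≠ w3) (h14 : w1 ≠ w4) (h15 : w1 ≠ w5)
    (h23 : w2 ≠ w3) (h24 : w2 ≠ w4) (h25 : w2 ≠ w5)
    (h34 : w3 ≠ w4) (h35 : w3 ≠ w5) (h45 : w4 ≠ w5)
    (i l : ℕ) (hi' : i ≤ 4) (hl' : l ≤ 4) :
    ∃ x : Fin 4 → α, Function.Injective x ∧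
      (∀ j, x j ∈ ({w1, w2, w3, w4, w5} : Set α)) ∧
      (∀ (j : ℕ) (h : j + 1 < 4),
        s(x ⟨j, by omega⟩, x ⟨j + 1, h⟩) ∈
          ({s(w1, w2), s(w2, w3), s(w3, w4), s(w4, w5), s(w5, w1)} : Set (Sym2 α))) ∧
      (Finset.univ.filter fun k => x k < x ⟨i - 1, by omega⟩).card = l - 1 := by
  let w : ZMod 5 → α := ![w1, w2, w3, w4, w5]
  have hw : Injective w := by
    intro a b hab
    fin_cases a <;> fin_cases b <;> simp_all [w] <;> rfl
  have hedge : ∀ u, s(w u, w (u + 1)) ∈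
      ({s(w1, w2), s(w2, w3), s(w3, w4), s(w4, w5), s(w5, w1)} : Set (Sym2 α)) := by
    intro u
    fin_cases u
    exacts [Or.inl rfl, Or.inr (Or.inl rfl), Or.inr (Or.inr (Or.inl rfl)),
      Or.inr (Or.inr (Or.inr (Or.inl rfl))), Or.inr (Or.inr (Or.inr (Or.inr rfl)))]
  obtain ⟨o, d, hd, hrank⟩ :=
    exists_cycleWalk_card_filter_lt_eq hw ⟨i - 1, by omega⟩ (t := l - 1) (by omega)
  have hd0 : d ≠ 0 := by rcases hd with rfl | rfl <;> decide
  refine ⟨fun k => w (cycleWalk o d k), hw.comp (injective_cycleWalk o hd0), fun j => ?_,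
    fun j hj => ?_, hrank⟩
  · have hmem : ∀ u, w u ∈ ({w1, w2, w3, w4, w5} : Set α) := by
      intro u
      fin_cases u <;> simp [w]
    exact hmem _
  · simpa only [cycleWalk_succ] using sym2_mk_add_mem_of_eq_one_or_eq_neg_one hedge hd _
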